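/- Let L = {0,…,s−1} and, for each l ∈ L, let Ã_l ∈ ℝ^{n×n}, B̃_l ∈ ℝ^{n×m}, B̃^w_l ∈ ℝ^{n×(l+1)q}, C̃_l ∈ ℝ^{(l+1)p×n}, D̃_l ∈ ℝ^{(l+1)p×m}, D̃^w_l ∈ ℝ^{(l+1)p×(l+1)q} be given, and let G̃ = (V,E) be a switching graph over L. Suppose γ > 0 and there exist symmetric matrices S_i ∈ ℝ^{n×n} and matrices G_i ∈ ℝ^{n×n}, R_i ∈ ℝ^{m×n}, i ∈ V, such that for every edge (i,j,l) ∈ E the block matrix [[G_i + G_iᵀ − S_i, 0, (Ã_l G_i + B̃_l R_i)ᵀ, (C̃_l G_i + D̃_l R_i)ᵀ], [0, γ I_{(l+1)q}, (B̃^w_l)ᵀ, (D̃^w_l)ᵀ], [Ã_l G_i + B̃_l R_i, B̃^w_l, S_j, 0], [C̃_l G_i + D̃_l R_i, D̃^w_l, 0, γ I_{(l+1)p}]] is positive definite. Then each G_i is invertible and, with the switched gains K_i = R_i G_i^{−1}, the switched closed-loop lifted system satisfies: for every pair of sequences (v, σ) with (v_k, v_{k+1}, σ_k) ∈ E for all k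 ∈ ℕ and dynamics x̃_{k+1} = (Ã_{σ_k} + B̃_{σ_k} K_{v_k}) x̃_k + B̃^w_{σ_k} w̃_k, z̃_k = (C̃_{σ_k} + D̃_{σ_k} K_{v_k}) x̃_k + D̃^w_{σ_k} w̃_k, it holds that (i) for every x̃_0 and w̃ ≡ 0, x̃_k → 0 as k → ∞, and (ii) for x̃_0 = 0 and every w̃ with 0 < ∑_{k=0}^∞ ‖w̃_k‖² < ∞, ∑_{k=0}^∞ ‖z̃_k‖² < γ² ∑_{k=0}^∞ ‖w̃_k‖². -/

import Mathlib

/-!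
With the storage function `V i x = xᵀ (S i)⁻¹ x`, each LMI is, by a Schur complement, the strict
dissipation inequality `γ V j x⁺ + ‖z‖² < γ V i x + γ² ‖w‖²` along the edge `(i, j, l)`, once
`G + Gᵀ - S ≤ Gᵀ S⁻¹ G` is used; this comes from `(G - S)ᵀ S⁻¹ (G - S) ≥ 0` and also shows that
`G` is invertible. For `w = 0` the `V i` are switched Lyapunov functions, and since there are
finitely many edges, compactness of the unit sphere gives a common contraction factor `ρ < 1`.
For `x 0 = 0`, summing the dissipation inequality along the walk telescopes to the ℓ² gain bound,
which is strict because some `w k` is nonzero.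
-/

open Matrix Filter Topology

section QuadraticForms

variable {ι : Type*} [Fintype ι]

theorem dotProduct_self_nonneg (v : ι → ℝ) : 0 ≤ v ⬝ᵥ v := by
  simpa using dotProduct_self_star_nonneg v

theorem sum_sq_eq_dotProduct_self (v : ι → ℝ) : ∑ i, v i ^ 2 = v ⬝ᵥ v := by
  simp [dotProduct, sq]

theorem dotProduct_transpose_mul_mul_mulVec {κ : Type*} [Fintype κ] (F : Matrix κ ι ℝ)
    (P : Matrix κ κ ℝ) (y : ι → ℝ) :
    y ⬝ᵥ (Fᵀ * P * F) *ᵥ y = (F *ᵥ y) ⬝ᵥ P *ᵥ (F *ᵥ y) := by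
  rw [← mulVec_mulVec, ← mulVec_mulVec, dotProduct_mulVec, vecMul_transpose]

theorem tendsto_zero_of_tendsto_dotProduct_self {α : Type*} {l : Filter α} {x : α → ι → ℝ}
    (h : Tendsto (fun k => x k ⬝ᵥ x k) l (𝓝 0)) : Tendsto x l (𝓝 0) := by
  refine tendsto_pi_nhds.2 fun i => squeeze_zero_norm (fun k => ?_) (by simpa using h.sqrt)
  rw [Real.norm_eq_abs]
  refine Real.abs_le_sqrt ?_
  simpa [sq, dotProduct] using Finset.single_le_sum (f := fun j => x k j * x k j)
    (fun j _ => mul_self_nonneg _) (Finset.mem_univ i)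

theorem exists_dotProduct_mulVec_le_mul {P : Matrix ι ι ℝ} (hP : P.PosDef) (Q : Matrix ι ι ℝ) :
    ∃ ρ, (∀ x, x ⬝ᵥ Q *ᵥ x ≤ ρ * (x ⬝ᵥ P *ᵥ x)) ∧
      ((∀ x, x ≠ 0 → x ⬝ᵥ Q *ᵥ x < x ⬝ᵥ P *ᵥ x) → ρ < 1) := by
  have hPpos : ∀ x : ι → ℝ, x ≠ 0 → 0 < x ⬝ᵥ P *ᵥ x := fun x hx => by
    simpa using hP.dotProduct_mulVec_pos hx
  cases isEmpty_or_nonempty ι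
  · exact ⟨0, fun x => by simp [Subsingleton.elim x 0], fun _ => zero_lt_one⟩
  -- `ratio` is invariant under scaling, so its maximum on the unit sphere bounds it everywhere.
  set ratio : (ι → ℝ) → ℝ := fun x => (x ⬝ᵥ Q *ᵥ x) / (x ⬝ᵥ P *ᵥ x)
  have hsphere : ∀ x ∈ Metric.sphere (0 : ι → ℝ) 1, x ≠ 0 := fun x hx h => by simp [h] at hx
  have hcont : ContinuousOn ratio (Metric.sphere 0 1) :=
    ContinuousOn.div (by fun_prop) (by fun_prop) fun x hx => (hPpos x (hsphere x hx)).ne'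
  obtain ⟨x₀, hx₀, hmax⟩ := (isCompact_sphere (0 : ι → ℝ) 1).exists_isMaxOn
    (NormedSpace.sphere_nonempty.2 zero_le_one) hcont
  refine ⟨ratio x₀, fun x => ?_, fun h =>
    (div_lt_one (hPpos _ (hsphere _ hx₀))).2 (h _ (hsphere _ hx₀))⟩
  rcases eq_or_ne x 0 with rfl | hx
  · simp
  have hscale : ratio (‖x‖⁻¹ • x) = ratio x := by
    simp only [ratio, mulVec_smul, dotProduct_smul, smul_dotProduct, smul_eq_mul]
    rw [← mul_assoc, ← mul_assoc, mul_div_mul_left]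
    positivity
  have hle : ratio (‖x‖⁻¹ • x) ≤ ratio x₀ :=
    hmax (show ‖x‖⁻¹ • x ∈ Metric.sphere 0 1 by simp [norm_smul, hx])
  rw [hscale] at hle
  exact (div_le_iff₀ (hPpos x hx)).1 hle

theorem exists_forall_dotProduct_mulVec_le_mul {T : Type*} [Finite T] {P : T → Matrix ι ι ℝ}
    (hP : ∀ t, (P t).PosDef) (Q : T → Matrix ι ι ℝ) :
    ∃ ρ, (∀ t x, x ⬝ᵥ Q t *ᵥ x ≤ ρ * (x ⬝ᵥ P t *ᵥ x)) ∧
      ((∀ t x, x ≠ 0 → x ⬝ᵥ Q t *ᵥ x < x ⬝ᵥ P t *ᵥ x) → ρ < 1) := by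
  choose ρ hle hlt using fun t => exists_dotProduct_mulVec_le_mul (hP t) (Q t)
  cases isEmpty_or_nonempty T
  · exact ⟨0, isEmptyElim, fun _ => zero_lt_one⟩
  obtain ⟨t₀, ht₀⟩ := Finite.exists_max ρ
  refine ⟨ρ t₀, fun t x => (hle t x).trans ?_, fun h => hlt t₀ (h t₀)⟩
  exact mul_le_mul_of_nonneg_right (ht₀ t)
    (by simpa using (hP t).posSemidef.dotProduct_mulVec_nonneg x)

end QuadraticForms

section SwitchedStability

variable {ι : Type*} [Fintype ι] [DecidableEq ι]

theorem tendsto_zero_of_switched_lyapunov {N L : Type*} [Finite N] [Finite L]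
    {E : Set (N × N × L)} {P : N → Matrix ι ι ℝ} (hP : ∀ i, (P i).PosDef)
    {F : N → L → Matrix ι ι ℝ}
    (hdec : ∀ i j l, (i, j, l) ∈ E → ∀ y, y ≠ 0 →
      (F i l *ᵥ y) ⬝ᵥ P j *ᵥ (F i l *ᵥ y) < y ⬝ᵥ P i *ᵥ y)
    {v : ℕ → N} {σ : ℕ → L} (hpath : ∀ k, (v k, v (k + 1), σ k) ∈ E)
    {x : ℕ → ι → ℝ} (hx : ∀ k, x (k + 1) = F (v k) (σ k) *ᵥ x k) :
    Tendsto x atTop (𝓝 0) := by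
  set V : ℕ → ℝ := fun k => x k ⬝ᵥ P (v k) *ᵥ x k
  have hV : ∀ k, 0 ≤ V k := fun k => by
    simpa using (hP (v k)).posSemidef.dotProduct_mulVec_nonneg (x k)
  obtain ⟨ρ, hρ, hρ1⟩ := exists_forall_dotProduct_mulVec_le_mul (T := E) (fun e => hP e.1.1)
    (fun e => (F e.1.1 e.1.2.2)ᵀ * P e.1.2.1 * F e.1.1 e.1.2.2)
  replace hρ1 : ρ < 1 := hρ1 fun e y hy => by
    rw [dotProduct_transpose_mul_mul_mulVec]
    exact hdec _ _ _ e.2 y hy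
  obtain ⟨C, hC, -⟩ := exists_forall_dotProduct_mulVec_le_mul hP fun _ => 1
  set r := max ρ 0
  have hstep : ∀ k, V (k + 1) ≤ r * V k := fun k => by
    have := hρ ⟨_, hpath k⟩ (x k)
    rw [dotProduct_transpose_mul_mul_mulVec, ← hx k] at this
    exact this.trans (mul_le_mul_of_nonneg_right (le_max_left _ _) (hV k))
  have hdecay : ∀ k, V k ≤ r ^ k * V 0 := fun k => by
    induction k with
    | zero => simp
    | succ k ih => calc
        V (k + 1) ≤ r * V k := hstep k
        _ ≤ r * (r ^ k * V 0) := mul_le_mul_of_nonneg_left ih (le_max_right _ _)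
        _ = r ^ (k + 1) * V 0 := by ring
  have hV0 : Tendsto V atTop (𝓝 0) := squeeze_zero hV hdecay <| by
    simpa using (tendsto_pow_atTop_nhds_zero_of_lt_one (le_max_right _ _)
      (max_lt hρ1 zero_lt_one)).mul_const (V 0)
  exact tendsto_zero_of_tendsto_dotProduct_self <| squeeze_zero
    (fun k => dotProduct_self_nonneg (x k)) (fun k => by simpa using hC (v k) (x k))
    (by simpa using hV0.const_mul C)

end SwitchedStability

theorem tsum_ofReal_lt_of_dissipation {V a b : ℕ → ℝ} (hV : ∀ k, 0 ≤ V k) (hV0 : V 0 = 0)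
    (ha : ∀ k, 0 ≤ a k) (hb : ∀ k, 0 ≤ b k) (hstep : ∀ k, V (k + 1) + a k ≤ V k + b k)
    (hstrict : ∃ k, V (k + 1) + a k < V k + b k) (hfin : ∑' k, ENNReal.ofReal (b k) ≠ ⊤) :
    ∑' k, ENNReal.ofReal (a k) < ∑' k, ENNReal.ofReal (b k) := by
  have hbs : Summable b := by
    simpa [ENNReal.toReal_ofReal (hb _)] using ENNReal.summable_toReal hfin
  set F : ℕ → ℝ := fun K => V K + ∑ k ∈ Finset.range K, (a k - b k)
  have hF : Antitone F := antitone_nat_of_succ_le fun K => by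
    simp only [F, Finset.sum_range_succ]
    linarith [hstep K]
  obtain ⟨k₀, hk₀⟩ := hstrict
  set δ := F k₀ - F (k₀ + 1)
  have hδ : 0 < δ := by
    simp only [δ, F, Finset.sum_range_succ]
    linarith
  have hpartial : ∀ K, ∑ k ∈ Finset.range K, a k ≤ ∑' k, b k - δ := fun K => by
    set K' := max K (k₀ + 1)
    have hFK' : F K' ≤ -δ := by
      have := hF (le_max_right K (k₀ + 1))
      have := hF (Nat.zero_le k₀)
      simp only [F, Finset.range_zero, Finset.sum_empty, hV0, add_zero] at *
      linarith
    calc ∑ k ∈ Finset.range K, a k ≤ ∑ k ∈ Finset.range K', a k :=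
          Finset.sum_le_sum_of_subset_of_nonneg (Finset.range_subset_range.2 (le_max_left _ _))
            fun k _ _ => ha k
      _ ≤ ∑ k ∈ Finset.range K', b k - δ := by
          simp only [F, Finset.sum_sub_distrib] at hFK'
          linarith [hV K']
      _ ≤ ∑' k, b k - δ := by
          linarith [hbs.sum_le_tsum (Finset.range K') fun k _ => hb k]
  have has : Summable a := summable_of_sum_range_le ha hpartial
  have hlt : ∑' k, a k < ∑' k, b k :=
    (Real.tsum_le_of_sum_range_le ha hpartial).trans_lt (by linarith)
  rw [← ENNReal.ofReal_tsum_of_nonneg ha has, ← ENNReal.ofReal_tsum_of_nonneg hb hbs]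
  exact (ENNReal.ofReal_lt_ofReal_iff ((tsum_nonneg ha).trans_lt hlt)).2 hlt

section Blocks

variable {α β : Type*}

theorem Matrix.PosDef.toBlocks₁₁ {R : Type*} [Ring R] [PartialOrder R] [StarRing R]
    {M : Matrix (α ⊕ β) (α ⊕ β) R} (hM : M.PosDef) : M.toBlocks₁₁.PosDef :=
  hM.submatrix Sum.inl_injective

theorem Matrix.PosDef.toBlocks₂₂ {R : Type*} [Ring R] [PartialOrder R] [StarRing R]
    {M : Matrix (α ⊕ β) (α ⊕ β) R} (hM : M.PosDef) : M.toBlocks₂₂.PosDef :=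
  hM.submatrix Sum.inr_injective

variable [Fintype α] [Fintype β]

theorem sumElim_dotProduct_fromBlocks_zero_mulVec (A : Matrix α α ℝ) (D : Matrix β β ℝ)
    (x : α → ℝ) (y : β → ℝ) :
    (x ⊕ᵥ y) ⬝ᵥ fromBlocks A 0 0 D *ᵥ (x ⊕ᵥ y) = x ⬝ᵥ A *ᵥ x + y ⬝ᵥ D *ᵥ y := by
  simp [fromBlocks_mulVec, sumElim_dotProduct_sumElim]

theorem dotProduct_inv_mulVec_lt_of_posDef_fromBlocks [DecidableEq β] {A : Matrix α α ℝ}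
    {B : Matrix β α ℝ} {D : Matrix β β ℝ} (hM : (fromBlocks A Bᵀ B D).PosDef) {x : α → ℝ}
    (hx : x ≠ 0) : (B *ᵥ x) ⬝ᵥ D⁻¹ *ᵥ (B *ᵥ x) < x ⬝ᵥ A *ᵥ x := by
  have hD : D.PosDef := hM.toBlocks₂₂
  have : Invertible D := hD.isUnit.invertible
  have hB : Bᵀᴴ = B := by simp
  have key := schur_complement_eq₂₂ A Bᵀ x (-((D⁻¹ * Bᵀᴴ) *ᵥ x)) hD.1
  rw [hB] at key
  have hpos := hM.dotProduct_mulVec_pos (x := x ⊕ᵥ -((D⁻¹ * B) *ᵥ x))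
    fun h => hx (funext fun i => congrFun h (Sum.inl i))
  simp only [star_trivial, add_neg_cancel, zero_vecMul, zero_dotProduct, zero_add] at key hpos
  rw [dotProduct_mulVec, key, ← dotProduct_mulVec, sub_mulVec, dotProduct_sub,
    dotProduct_transpose_mul_mul_mulVec] at hpos
  linarith

end Blocks

section Synthesis

variable {ι κ τ μ : Type*} [Fintype ι] [Fintype κ] [Fintype τ] [Fintype μ] [DecidableEq ι]

theorem dotProduct_mulVec_add_transpose_sub_le {S : Matrix ι ι ℝ} (hS : S.PosDef)
    (G : Matrix ι ι ℝ) (u : ι → ℝ) :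
    u ⬝ᵥ (G + Gᵀ - S) *ᵥ u ≤ (G *ᵥ u) ⬝ᵥ S⁻¹ *ᵥ (G *ᵥ u) := by
  have hinv : S⁻¹ *ᵥ (S *ᵥ u) = u := by
    rw [mulVec_mulVec, nonsing_inv_mul _ ((isUnit_iff_isUnit_det _).1 hS.isUnit), one_mulVec]
  have hsymm : ∀ y, (S *ᵥ u) ⬝ᵥ S⁻¹ *ᵥ y = u ⬝ᵥ y := fun y => by
    rw [dotProduct_mulVec, ← hS.inv.isHermitian.eq, conjTranspose_eq_transpose_of_trivial,
      vecMul_transpose, hinv]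
  have hsq := hS.inv.posSemidef.dotProduct_mulVec_nonneg (G *ᵥ u - S *ᵥ u)
  rw [star_trivial, mulVec_sub, dotProduct_sub, sub_dotProduct, sub_dotProduct, hsymm, hsymm,
    hinv, dotProduct_comm u (G *ᵥ u)] at hsq
  simp only [add_mulVec, sub_mulVec, dotProduct_add, dotProduct_sub, dotProduct_mulVec u Gᵀ,
    vecMul_transpose, dotProduct_comm u (G *ᵥ u)]
  linarith

theorem isUnit_of_posDef_add_transpose_sub {S G : Matrix ι ι ℝ} (hS : S.PosDef)
    (h : (G + Gᵀ - S).PosDef) : IsUnit G := by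
  rw [isUnit_iff_isUnit_det, isUnit_iff_ne_zero]
  intro hdet
  obtain ⟨u, hu, hGu⟩ := exists_mulVec_eq_zero_iff.2 hdet
  have := (h.dotProduct_mulVec_pos hu).trans_le (dotProduct_mulVec_add_transpose_sub_le hS G u)
  simp [hGu] at this

theorem mul_add_mul_mulVec_inv_mulVec {ν : Type*} {G : Matrix ι ι ℝ} (hG : G * G⁻¹ = 1)
    (X : Matrix ν ι ℝ) (Y : Matrix ν μ ℝ) (R : Matrix μ ι ℝ) (x : ι → ℝ) :
    (X * G + Y * R) *ᵥ (G⁻¹ *ᵥ x) = (X + Y * (R * G⁻¹)) *ᵥ x := by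
  rw [mulVec_mulVec, Matrix.add_mul, Matrix.mul_assoc, Matrix.mul_assoc, hG, Matrix.mul_one]

variable [DecidableEq κ] [DecidableEq τ]

/-- On an edge `(i, j, l)`: `G = G i`, `S = S i`, `S' = S j`, `A = Ã l * G + B̃ l * R i` and
`C = C̃ l * G + D̃ l * R i`. -/
def synthesisLMI (γ : ℝ) (G S S' A : Matrix ι ι ℝ) (Bw : Matrix ι κ ℝ) (C : Matrix τ ι ℝ)
    (Dw : Matrix τ κ ℝ) : Matrix ((ι ⊕ κ) ⊕ (ι ⊕ τ)) ((ι ⊕ κ) ⊕ (ι ⊕ τ)) ℝ :=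
  fromBlocks (fromBlocks (G + Gᵀ - S) 0 0 (γ • 1)) (fromBlocks Aᵀ Cᵀ Bwᵀ Dwᵀ)
    (fromBlocks A Bw C Dw) (fromBlocks S' 0 0 (γ • 1))

theorem dissipation_of_posDef_synthesisLMI {γ : ℝ} (hγ : 0 < γ) {S S' G A : Matrix ι ι ℝ}
    {Bw : Matrix ι κ ℝ} {C : Matrix τ ι ℝ} {Dw : Matrix τ κ ℝ} (hS : S.PosDef)
    (hM : (synthesisLMI γ G S S' A Bw C Dw).PosDef) {u : ι → ℝ} {w : κ → ℝ}
    (huw : u ≠ 0 ∨ w ≠ 0) :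
    (A *ᵥ u + Bw *ᵥ w) ⬝ᵥ S'⁻¹ *ᵥ (A *ᵥ u + Bw *ᵥ w) +
        γ⁻¹ * ((C *ᵥ u + Dw *ᵥ w) ⬝ᵥ (C *ᵥ u + Dw *ᵥ w)) <
      (G *ᵥ u) ⬝ᵥ S⁻¹ *ᵥ (G *ᵥ u) + γ * (w ⬝ᵥ w) := by
  rw [synthesisLMI, ← fromBlocks_transpose] at hM
  have hS' : S'.PosDef := hM.toBlocks₂₂.toBlocks₁₁
  have hγ1 : (γ • (1 : Matrix τ τ ℝ)).PosDef := hM.toBlocks₂₂.toBlocks₂₂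
  have hinv : (fromBlocks S' 0 0 (γ • (1 : Matrix τ τ ℝ)))⁻¹ =
      fromBlocks S'⁻¹ 0 0 (γ⁻¹ • 1) := by
    rw [inv_fromBlocks_zero₂₁_of_isUnit_iff _ _ _ (iff_of_true hS'.isUnit hγ1.isUnit),
      inv_eq_right_inv (A := γ • (1 : Matrix τ τ ℝ)) (B := γ⁻¹ • 1) (by simp [smul_smul, hγ.ne'])]
    simp
  have huw' : u ⊕ᵥ w ≠ 0 := fun h => huw.elim
    (fun hu => hu (funext fun i => congrFun h (Sum.inl i)))
    (fun hw => hw (funext fun i => congrFun h (Sum.inr i)))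
  have := dotProduct_inv_mulVec_lt_of_posDef_fromBlocks hM huw'
  rw [hinv, fromBlocks_mulVec] at this
  simp only [Sum.elim_comp_inl, Sum.elim_comp_inr, sumElim_dotProduct_fromBlocks_zero_mulVec,
    smul_mulVec, one_mulVec, dotProduct_smul, smul_eq_mul] at this
  linarith [dotProduct_mulVec_add_transpose_sub_le hS G u]

theorem closedLoop_dissipation {γ : ℝ} (hγ : 0 < γ) {S S' G A : Matrix ι ι ℝ}
    {B : Matrix ι μ ℝ} {R : Matrix μ ι ℝ} {Bw : Matrix ι κ ℝ} {C : Matrix τ ι ℝ}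
    {D : Matrix τ μ ℝ} {Dw : Matrix τ κ ℝ} (hS : S.PosDef)
    (hM : (synthesisLMI γ G S S' (A * G + B * R) Bw (C * G + D * R) Dw).PosDef)
    {x x' : ι → ℝ} {w : κ → ℝ} {z : τ → ℝ}
    (hx' : x' = (A + B * (R * G⁻¹)) *ᵥ x + Bw *ᵥ w)
    (hz : z = (C + D * (R * G⁻¹)) *ᵥ x + Dw *ᵥ w) (hxw : x ≠ 0 ∨ w ≠ 0) :
    γ * (x' ⬝ᵥ S'⁻¹ *ᵥ x') + z ⬝ᵥ z < γ * (x ⬝ᵥ S⁻¹ *ᵥ x) + γ ^ 2 * (w ⬝ᵥ w) := by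
  have hG : IsUnit G := isUnit_of_posDef_add_transpose_sub hS hM.toBlocks₁₁.toBlocks₁₁
  have hGG : G * G⁻¹ = 1 := mul_nonsing_inv _ ((isUnit_iff_isUnit_det _).1 hG)
  have hGu : G *ᵥ (G⁻¹ *ᵥ x) = x := by rw [mulVec_mulVec, hGG, one_mulVec]
  have huw : G⁻¹ *ᵥ x ≠ 0 ∨ w ≠ 0 :=
    hxw.imp_left fun hx hu => hx (by rw [← hGu, hu, mulVec_zero])
  have := dissipation_of_posDef_synthesisLMI hγ hS hM huw
  rw [mul_add_mul_mulVec_inv_mulVec hGG, mul_add_mul_mulVec_inv_mulVec hGG, hGu, ← hx', ← hz]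
    at this
  have := mul_lt_mul_of_pos_left this hγ
  rwa [mul_add, mul_add, ← mul_assoc γ γ⁻¹, mul_inv_cancel₀ hγ.ne', one_mul, ← mul_assoc,
    ← sq] at this

theorem closedLoop_dissipation_le {γ : ℝ} (hγ : 0 < γ) {S S' G A : Matrix ι ι ℝ}
    {B : Matrix ι μ ℝ} {R : Matrix μ ι ℝ} {Bw : Matrix ι κ ℝ} {C : Matrix τ ι ℝ}
    {D : Matrix τ μ ℝ} {Dw : Matrix τ κ ℝ} (hS : S.PosDef)
    (hM : (synthesisLMI γ G S S' (A * G + B * R) Bw (C * G + D * R) Dw).PosDef)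
    {x x' : ι → ℝ} {w : κ → ℝ} {z : τ → ℝ}
    (hx' : x' = (A + B * (R * G⁻¹)) *ᵥ x + Bw *ᵥ w)
    (hz : z = (C + D * (R * G⁻¹)) *ᵥ x + Dw *ᵥ w) :
    γ * (x' ⬝ᵥ S'⁻¹ *ᵥ x') + z ⬝ᵥ z ≤ γ * (x ⬝ᵥ S⁻¹ *ᵥ x) + γ ^ 2 * (w ⬝ᵥ w) := by
  by_cases h : x = 0 ∧ w = 0
  · obtain ⟨rfl, rfl⟩ := h
    simp [hx', hz]
  · exact (closedLoop_dissipation hγ hS hM hx' hz (not_and_or.1 h)).le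

end Synthesis

theorem stmt4_general
    (s n m q p nV : ℕ)
    (At : Fin s → Matrix (Fin n) (Fin n) ℝ)
    (Bt : Fin s → Matrix (Fin n) (Fin m) ℝ)
    (Bw : (l : Fin s) → Matrix (Fin n) (Fin ((l : ℕ) + 1) × Fin q) ℝ)
    (Ct : (l : Fin s) → Matrix (Fin ((l : ℕ) + 1) × Fin p) (Fin n) ℝ)
    (Dt : (l : Fin s) → Matrix (Fin ((l : ℕ) + 1) × Fin p) (Fin m) ℝ)
    (Dw : (l : Fin s) → Matrix (Fin ((l : ℕ) + 1) × Fin p) (Fin ((l : ℕ) + 1) × Fin q) ℝ)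
    (E : Set (Fin nV × Fin nV × Fin s))
    (hout : ∀ i : Fin nV, ∃ j l, (i, j, l) ∈ E)
    (hin : ∀ j : Fin nV, ∃ i l, (i, j, l) ∈ E)
    (γ : ℝ) (hγ : 0 < γ)
    (S G : Fin nV → Matrix (Fin n) (Fin n) ℝ)
    (R : Fin nV → Matrix (Fin m) (Fin n) ℝ)
    (hLMI : ∀ i j l, (i, j, l) ∈ E →
      (Matrix.fromBlocks
        (Matrix.fromBlocks (G i + (G i)ᵀ - S i) 0 0
          (γ • (1 : Matrix (Fin ((l : ℕ) + 1) × Fin q) (Fin ((l : ℕ) + 1) × Fin q) ℝ)))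
        (Matrix.fromBlocks (At l * G i + Bt l * R i)ᵀ (Ct l * G i + Dt l * R i)ᵀ
          (Bw l)ᵀ (Dw l)ᵀ)
        (Matrix.fromBlocks (At l * G i + Bt l * R i) (Bw l)
          (Ct l * G i + Dt l * R i) (Dw l))
        (Matrix.fromBlocks (S j) 0 0
          (γ • (1 : Matrix (Fin ((l : ℕ) + 1) × Fin p) (Fin ((l : ℕ) + 1) × Fin p) ℝ)))).PosDef) :
    (∀ i, IsUnit (G i)) ∧
    ∀ (v : ℕ → Fin nV) (σ : ℕ → Fin s),
      (∀ k, (v k, v (k + 1), σ k) ∈ E) →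
      -- (i) internal (asymptotic) stability of the switched closed loop
      ((∀ x : ℕ → Fin n → ℝ,
          (∀ k, x (k + 1) =
            (At (σ k) + Bt (σ k) * (R (v k) * (G (v k))⁻¹)).mulVec (x k)) →
          Tendsto x atTop (nhds 0)) ∧
      -- (ii) closed-loop ℓ2-gain bound for zero initial state
       (∀ (x : ℕ → Fin n → ℝ)
          (w : (k : ℕ) → Fin ((σ k : ℕ) + 1) × Fin q → ℝ)
          (z : (k : ℕ) → Fin ((σ k : ℕ) + 1) × Fin p → ℝ),
          x 0 = 0 →
          (∀ k, x (k + 1) =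
            (At (σ k) + Bt (σ k) * (R (v k) * (G (v k))⁻¹)).mulVec (x k) +
            (Bw (σ k)).mulVec (w k)) →
          (∀ k, z k =
            (Ct (σ k) + Dt (σ k) * (R (v k) * (G (v k))⁻¹)).mulVec (x k) +
            (Dw (σ k)).mulVec (w k)) →
          0 < ∑' k, ENNReal.ofReal (∑ i, (w k i) ^ 2) →
          (∑' k, ENNReal.ofReal (∑ i, (w k i) ^ 2)) < ⊤ →
          (∑' k, ENNReal.ofReal (∑ i, (z k i) ^ 2)) <
            ENNReal.ofReal γ ^ 2 * ∑' k, ENNReal.ofReal (∑ i, (w k i) ^ 2))) := by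
  have hS : ∀ i, (S i).PosDef := fun i => by
    obtain ⟨i', l, h⟩ := hin i
    exact (hLMI i' i l h).toBlocks₂₂.toBlocks₁₁
  refine ⟨fun i => ?_, fun v σ hpath =>
    ⟨fun x hx => ?_, fun x w z hx0 hx hz hwpos hwfin => ?_⟩⟩
  · obtain ⟨j, l, h⟩ := hout i
    exact isUnit_of_posDef_add_transpose_sub (hS i) (hLMI i j l h).toBlocks₁₁.toBlocks₁₁
  · refine tendsto_zero_of_switched_lyapunov (fun i => (hS i).inv)
      (F := fun i l => At l + Bt l * (R i * (G i)⁻¹)) (fun i j l he y hy => ?_) hpath hx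
    have := closedLoop_dissipation hγ (hS i) (hLMI i j l he) rfl rfl (w := 0) (Or.inl hy)
    simp only [mulVec_zero, add_zero, dotProduct_zero, mul_zero] at this
    have hz := dotProduct_self_nonneg ((Ct l + Dt l * (R i * (G i)⁻¹)) *ᵥ y)
    exact lt_of_mul_lt_mul_left (by linarith) hγ.le
  · simp only [sum_sq_eq_dotProduct_self] at hwpos hwfin ⊢
    obtain ⟨k₀, hk₀⟩ : ∃ k, w k ≠ 0 := by
      by_contra! h
      simp [h] at hwpos
    have hgain : ∑' k, ENNReal.ofReal (γ ^ 2 * (w k ⬝ᵥ w k)) =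
        ENNReal.ofReal γ ^ 2 * ∑' k, ENNReal.ofReal (w k ⬝ᵥ w k) := by
      simp_rw [ENNReal.ofReal_mul (sq_nonneg γ), ENNReal.tsum_mul_left, ENNReal.ofReal_pow hγ.le]
    rw [← hgain]
    refine tsum_ofReal_lt_of_dissipation (V := fun k => γ * (x k ⬝ᵥ (S (v k))⁻¹ *ᵥ x k))
      (fun k => mul_nonneg hγ.le ?_) (by simp [hx0]) (fun k => dotProduct_self_nonneg _)
      (fun k => mul_nonneg (sq_nonneg γ) (dotProduct_self_nonneg _))
      (fun k => closedLoop_dissipation_le hγ (hS _) (hLMI _ _ _ (hpath k)) (hx k) (hz k))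
      ⟨k₀, closedLoop_dissipation hγ (hS _) (hLMI _ _ _ (hpath k₀)) (hx k₀) (hz k₀)
        (Or.inr hk₀)⟩
      (hgain ▸ ENNReal.mul_ne_top (by simp) hwfin.ne)
    simpa using (hS (v k)).inv.posSemidef.dotProduct_mulVec_nonneg (x k)

/-- synthesis of switched state-feedback gains K_i = R_i G_i⁻¹ with
guaranteed ℓ2-performance for the lifted constrained switched system; the gain
applied at step k is the one of the current node v_k of the graph walk. -/
theorem stmt4
    (s n m q p nV : ℕ) (hs : 1 ≤ s)
    (At : Fin s → Matrix (Fin n) (Fin n) ℝ)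
    (Bt : Fin s → Matrix (Fin n) (Fin m) ℝ)
    (Bw : (l : Fin s) → Matrix (Fin n) (Fin ((l : ℕ) + 1) × Fin q) ℝ)
    (Ct : (l : Fin s) → Matrix (Fin ((l : ℕ) + 1) × Fin p) (Fin n) ℝ)
    (Dt : (l : Fin s) → Matrix (Fin ((l : ℕ) + 1) × Fin p) (Fin m) ℝ)
    (Dw : (l : Fin s) → Matrix (Fin ((l : ℕ) + 1) × Fin p) (Fin ((l : ℕ) + 1) × Fin q) ℝ)
    (E : Set (Fin nV × Fin nV × Fin s))
    (hout : ∀ i : Fin nV, ∃ j l, (i, j, l) ∈ E)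
    (hin : ∀ j : Fin nV, ∃ i l, (i, j, l) ∈ E)
    (γ : ℝ) (hγ : 0 < γ)
    (S G : Fin nV → Matrix (Fin n) (Fin n) ℝ)
    (R : Fin nV → Matrix (Fin m) (Fin n) ℝ)
    (hSsymm : ∀ i, (S i).IsSymm)
    (hLMI : ∀ i j l, (i, j, l) ∈ E →
      (Matrix.fromBlocks
        (Matrix.fromBlocks (G i + (G i)ᵀ - S i) 0 0
          (γ • (1 : Matrix (Fin ((l : ℕ) + 1) × Fin q) (Fin ((l : ℕ) + 1) × Fin q) ℝ)))
        (Matrix.fromBlocks (At l * G i + Bt l * R i)ᵀ (Ct l * G i + Dt l * R i)ᵀ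
          (Bw l)ᵀ (Dw l)ᵀ)
        (Matrix.fromBlocks (At l * G i + Bt l * R i) (Bw l)
          (Ct l * G i + Dt l * R i) (Dw l))
        (Matrix.fromBlocks (S j) 0 0
          (γ • (1 : Matrix (Fin ((l : ℕ) + 1) × Fin p) (Fin ((l : ℕ) + 1) × Fin p) ℝ)))).PosDef) :
    (∀ i, IsUnit (G i)) ∧
    ∀ (v : ℕ → Fin nV) (σ : ℕ → Fin s),
      (∀ k, (v k, v (k + 1), σ k) ∈ E) →
      -- (i) internal (asymptotic) stability of the switched closed loop
      ((∀ x : ℕ → Fin n → ℝ,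
          (∀ k, x (k + 1) =
            (At (σ k) + Bt (σ k) * (R (v k) * (G (v k))⁻¹)).mulVec (x k)) →
          Tendsto x atTop (nhds 0)) ∧
      -- (ii) closed-loop ℓ2-gain bound for zero initial state
       (∀ (x : ℕ → Fin n → ℝ)
          (w : (k : ℕ) → Fin ((σ k : ℕ) + 1) × Fin q → ℝ)
          (z : (k : ℕ) → Fin ((σ k : ℕ) + 1) × Fin p → ℝ),
          x 0 = 0 →
          (∀ k, x (k + 1) =
            (At (σ k) + Bt (σ k) * (R (v k) * (G (v k))⁻¹)).mulVec (x k) +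
            (Bw (σ k)).mulVec (w k)) →
          (∀ k, z k =
            (Ct (σ k) + Dt (σ k) * (R (v k) * (G (v k))⁻¹)).mulVec (x k) +
            (Dw (σ k)).mulVec (w k)) →
          0 < ∑' k, ENNReal.ofReal (∑ i, (w k i) ^ 2) →
          (∑' k, ENNReal.ofReal (∑ i, (w k i) ^ 2)) < ⊤ →
          (∑' k, ENNReal.ofReal (∑ i, (z k i) ^ 2)) <
            ENNReal.ofReal γ ^ 2 * ∑' k, ENNReal.ofReal (∑ i, (w k i) ^ 2))) :=
  stmt4_general s n m q p nV At Bt Bw Ct Dt Dw E hout hin γ hγ S G R hLMI
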